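/- Let A^{(1)},…,A^{(N)} be invertible 2×2 real matrices with all entries strictly positive and let s ∈ [0,2]. Then there exists a constant c > 0, depending only on the matrices and s, such that for every n ≥ 1, every word (i₁,…,i_n) ∈ {1,…,N}^n with A := A^{(i₁)} ⋯ A^{(i_n)}, and every x ∈ (0,1), c⁻¹ φ^s(A) ≤ ψ_{A,s}(x) ≤ c φ^s(A). -/

import Mathlib

open Set Metric

noncomputable def opNorm (A : Matrix (Fin 2) (Fin 2) ℝ) : ℝ :=
  ‖LinearMap.toContinuousLinearMap (Matrix.toEuclideanLin A)‖

noncomputable def phiSV (s : ℝ) (A : Matrix (Fin 2) (Fin 2) ℝ) : ℝ :=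
  if s ≤ 1 then opNorm A ^ s else opNorm A ^ (2 - s) * |A.det| ^ (s - 1)

/-- For a 2×2 real matrix `A = [[a,b],[c,d]]`, `wReal A x = (a+c−b−d)x + b + d`. -/
noncomputable def wReal (A : Matrix (Fin 2) (Fin 2) ℝ) (x : ℝ) : ℝ :=
  (A 0 0 + A 1 0 - A 0 1 - A 1 1) * x + A 0 1 + A 1 1

/-- `ψ_{A,s}(x) = w_A(x)^s` for `0 ≤ s ≤ 1` and `w_A(x)^{2−s}|det A|^{s−1}` for `1 < s ≤ 2`. -/
noncomputable def psiReal (s : ℝ) (A : Matrix (Fin 2) (Fin 2) ℝ) (x : ℝ) : ℝ :=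
  if s ≤ 1 then wReal A x ^ s else wReal A x ^ (2 - s) * |A.det| ^ (s - 1)

/-!
Let `K` bound the ratio of two entries in the same row of any generator. Comparability of the
entries within each row, with constant `K`, survives multiplication of nonnegative matrices, so
it holds for every product `A`. Then `w_A(x)`, a convex combination of the two column sums of
`A`, is comparable with the sum of all entries of `A`, and so is `‖A‖`, being squeezed between
the largest entry and the sum of all entries. Raising to an exponent in `[0, 2]` and multiplying
by `|det A|^(s-1)` only squares the comparability constant.
-/

open scoped Matrix.Norms.L2Operator

namespace Matrix

section L2OpNorm

variable {𝕜 m n : Type*} [RCLike 𝕜] [Fintype m] [Fintype n]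

theorem norm_apply_le_l2_opNorm [DecidableEq n] (A : Matrix m n 𝕜) (i : m) (j : n) :
    ‖A i j‖ ≤ ‖A‖ := by
  have h := A.l2_opNorm_mulVec (PiLp.single 2 j (1 : 𝕜))
  rw [PiLp.norm_single, norm_one, mul_one] at h
  refine le_trans ?_ h
  simpa using PiLp.norm_apply_le
    ((EuclideanSpace.equiv m 𝕜).symm (A *ᵥ (PiLp.single 2 j (1 : 𝕜)).ofLp)) i

theorem l2_opNorm_single_le [DecidableEq m] [DecidableEq n] (i : m) (j : n) (a : 𝕜) :
    ‖(single i j a : Matrix m n 𝕜)‖ ≤ ‖a‖ := by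
  rw [l2_opNorm_def]
  refine ContinuousLinearMap.opNorm_le_bound _ (norm_nonneg a) fun x => ?_
  change ‖WithLp.toLp 2 (single i j a *ᵥ x.ofLp)‖ ≤ _
  rw [single_mulVec, ← Pi.single, PiLp.toLp_single, PiLp.norm_single, norm_mul]
  exact mul_le_mul_of_nonneg_left (PiLp.norm_apply_le x j) (norm_nonneg a)

theorem l2_opNorm_le_sum_norm [DecidableEq m] [DecidableEq n] (A : Matrix m n 𝕜) :
    ‖A‖ ≤ ∑ i, ∑ j, ‖A i j‖ := by
  conv_lhs => rw [A.matrix_eq_sum_single]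
  exact (norm_sum_le _ _).trans <| Finset.sum_le_sum fun i _ =>
    (norm_sum_le _ _).trans <| Finset.sum_le_sum fun j _ => l2_opNorm_single_le i j _

end L2OpNorm

section RowComparable

variable {ι n : Type*} [Fintype n]

def rowComparable (K : ℝ) : Subsemigroup (Matrix n n ℝ) where
  carrier := {P | (∀ i j, 0 ≤ P i j) ∧ ∀ i j j', P i j ≤ K * P i j'}
  mul_mem' := by
    rintro P Q ⟨hP, -⟩ ⟨hQ, hQK⟩
    refine ⟨fun i j => Finset.sum_nonneg fun k _ => mul_nonneg (hP i k) (hQ k j),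
      fun i j j' => ?_⟩
    simp only [mul_apply, Finset.mul_sum]
    refine Finset.sum_le_sum fun k _ => ?_
    rw [mul_left_comm]
    exact mul_le_mul_of_nonneg_left (hQK k j j') (hP i k)

theorem exists_forall_mem_rowComparable [Finite ι] (A : ι → Matrix n n ℝ)
    (hpos : ∀ k i j, 0 < A k i j) : ∃ K, ∀ k, A k ∈ rowComparable K := by
  obtain ⟨K, hK⟩ := (Set.finite_range
    fun p : ι × n × n × n => A p.1 p.2.1 p.2.2.1 / A p.1 p.2.1 p.2.2.2).bddAbove
  refine ⟨K, fun k => ⟨fun i j => (hpos k i j).le, fun i j j' => ?_⟩⟩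
  exact (div_le_iff₀ (hpos k i j')).1 (hK ⟨(k, i, j, j'), rfl⟩)

end RowComparable

end Matrix

open Matrix

theorem opNorm_eq_l2_opNorm (A : Matrix (Fin 2) (Fin 2) ℝ) : opNorm A = ‖A‖ := rfl

theorem wReal_eq_mul_add_mul (A : Matrix (Fin 2) (Fin 2) ℝ) (x : ℝ) :
    wReal A x = x * (A 0 0 + A 1 0) + (1 - x) * (A 0 1 + A 1 1) := by
  rw [wReal]; ring

theorem wReal_nonneg {A : Matrix (Fin 2) (Fin 2) ℝ} (hA : ∀ i j, 0 ≤ A i j) {x : ℝ}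
    (hx : x ∈ Icc 0 1) : 0 ≤ wReal A x := by
  rw [wReal_eq_mul_add_mul]
  exact add_nonneg (mul_nonneg hx.1 (add_nonneg (hA 0 0) (hA 1 0)))
    (mul_nonneg (sub_nonneg.2 hx.2) (add_nonneg (hA 0 1) (hA 1 1)))

theorem wReal_le_two_mul_opNorm (A : Matrix (Fin 2) (Fin 2) ℝ) {x : ℝ} (hx : x ∈ Icc 0 1) :
    wReal A x ≤ 2 * opNorm A := by
  have hle : ∀ i j, A i j ≤ opNorm A := fun i j =>
    (le_abs_self _).trans (norm_apply_le_l2_opNorm A i j)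
  rw [wReal_eq_mul_add_mul]
  nlinarith [hle 0 0, hle 1 0, hle 0 1, hle 1 1, hx.1, hx.2]

theorem opNorm_le_mul_wReal {K : ℝ} {A : Matrix (Fin 2) (Fin 2) ℝ} (hA : A ∈ rowComparable K)
    {x : ℝ} (hx : x ∈ Icc 0 1) : opNorm A ≤ (1 + K) * wReal A x := by
  obtain ⟨hA0, hAK⟩ := hA
  have hsum : opNorm A ≤ (A 0 0 + A 1 0) + (A 0 1 + A 1 1) := by
    have := l2_opNorm_le_sum_norm A
    simp only [Fin.sum_univ_two, Real.norm_of_nonneg (hA0 _ _)] at this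
    rw [opNorm_eq_l2_opNorm]; linarith
  rw [wReal_eq_mul_add_mul]
  -- each column sum `cⱼ` is at most `K` times the other, so `K * w_A(x) ≥ (1 - x) c₀ + x c₁`
  nlinarith [mul_nonneg hx.1 (sub_nonneg.2 (add_le_add (hAK 0 1 0) (hAK 1 1 0))),
    mul_nonneg (sub_nonneg.2 hx.2) (sub_nonneg.2 (add_le_add (hAK 0 0 1) (hAK 1 0 1)))]

theorem rpow_le_sq_mul_rpow {C u v t : ℝ} (hC : 1 ≤ C) (hu : 0 ≤ u) (huv : u ≤ C * v)
    (ht₀ : 0 ≤ t) (ht₂ : t ≤ 2) : u ^ t ≤ C ^ 2 * v ^ t := by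
  have hv : 0 ≤ v := nonneg_of_mul_nonneg_right (hu.trans huv) (by linarith)
  calc u ^ t ≤ (C * v) ^ t := Real.rpow_le_rpow hu huv ht₀
    _ = C ^ t * v ^ t := Real.mul_rpow (by linarith) hv
    _ ≤ C ^ 2 * v ^ t := by
      gcongr
      exact_mod_cast Real.rpow_le_rpow_of_exponent_le hC ht₂

noncomputable def svPow (s r d : ℝ) : ℝ :=
  if s ≤ 1 then r ^ s else r ^ (2 - s) * |d| ^ (s - 1)

theorem phiSV_eq_svPow (s : ℝ) (A : Matrix (Fin 2) (Fin 2) ℝ) :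
    phiSV s A = svPow s (opNorm A) A.det := rfl

theorem psiReal_eq_svPow (s : ℝ) (A : Matrix (Fin 2) (Fin 2) ℝ) (x : ℝ) :
    psiReal s A x = svPow s (wReal A x) A.det := rfl

theorem svPow_le_sq_mul {s C u v : ℝ} (d : ℝ) (hs : s ∈ Icc 0 2) (hC : 1 ≤ C) (hu : 0 ≤ u)
    (huv : u ≤ C * v) : svPow s u d ≤ C ^ 2 * svPow s v d := by
  unfold svPow
  split_ifs with hs₁
  · exact rpow_le_sq_mul_rpow hC hu huv hs.1 (by linarith)
  · rw [← mul_assoc]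
    gcongr
    exact rpow_le_sq_mul_rpow hC hu huv (by linarith [hs.2]) (by linarith [hs.1])

theorem psiReal_comparable_phiSV_general (N : ℕ) (A : Fin N → Matrix (Fin 2) (Fin 2) ℝ)
    (hpos : ∀ k, ∀ i j, 0 < A k i j)
    (s : ℝ) (hs : s ∈ Set.Icc (0 : ℝ) 2) :
    ∃ c : ℝ, 0 < c ∧ ∀ n : ℕ, 1 ≤ n → ∀ i : Fin n → Fin N, ∀ x ∈ Set.Ioo (0 : ℝ) 1,
      c⁻¹ * phiSV s (((List.ofFn i).map A).prod)
          ≤ psiReal s (((List.ofFn i).map A).prod) x ∧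
      psiReal s (((List.ofFn i).map A).prod) x
          ≤ c * phiSV s (((List.ofFn i).map A).prod) := by
  obtain ⟨K, hK⟩ := exists_forall_mem_rowComparable A hpos
  set C := max 2 (1 + K)
  have hC : 1 ≤ C := le_max_of_le_left one_le_two
  refine ⟨C ^ 2, by positivity, fun n hn i x hx => ?_⟩
  set P := ((List.ofFn i).map A).prod
  have hP : P ∈ rowComparable K :=
    List.prod_induction_nonempty (· ∈ rowComparable K) (fun _ _ => mul_mem)
      (by simpa using Nat.one_le_iff_ne_zero.1 hn) (by simp [hK])
  replace hx : x ∈ Icc 0 1 := Ioo_subset_Icc_self hx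
  have hw : wReal P x ≤ C * opNorm P := (wReal_le_two_mul_opNorm P hx).trans
    (mul_le_mul_of_nonneg_right (le_max_left _ _) (norm_nonneg _))
  have ho : opNorm P ≤ C * wReal P x := (opNorm_le_mul_wReal hP hx).trans
    (mul_le_mul_of_nonneg_right (le_max_right _ _) (wReal_nonneg hP.1 hx))
  rw [phiSV_eq_svPow, psiReal_eq_svPow]
  refine ⟨?_, svPow_le_sq_mul P.det hs hC (wReal_nonneg hP.1 hx) hw⟩
  rw [inv_mul_le_iff₀ (by positivity)]
  exact svPow_le_sq_mul P.det hs hC (norm_nonneg _) ho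

/-- For positive invertible 2×2 matrices and `s ∈ [0,2]` there is `c > 0`
such that `c⁻¹ φ^s(A) ≤ ψ_{A,s}(x) ≤ c φ^s(A)` uniformly over words `A` and `x ∈ (0,1)`. -/
theorem psiReal_comparable_phiSV (N : ℕ) (A : Fin N → Matrix (Fin 2) (Fin 2) ℝ)
    (hpos : ∀ k, ∀ i j, 0 < A k i j) (hinv : ∀ k, (A k).det ≠ 0)
    (s : ℝ) (hs : s ∈ Set.Icc (0 : ℝ) 2) :
    ∃ c : ℝ, 0 < c ∧ ∀ n : ℕ, 1 ≤ n → ∀ i : Fin n → Fin N, ∀ x ∈ Set.Ioo (0 : ℝ) 1,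
      c⁻¹ * phiSV s (((List.ofFn i).map A).prod)
          ≤ psiReal s (((List.ofFn i).map A).prod) x ∧
      psiReal s (((List.ofFn i).map A).prod) x
          ≤ c * phiSV s (((List.ofFn i).map A).prod) :=
  psiReal_comparable_phiSV_general N A hpos s hs
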